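/- A class K of finite structures is a Fraïssé class (an age class with the amalgamation property) if and only if K is the age of some Fraïssé structure (a countably infinite, locally finite, ultrahomogeneous structure). -/

import Mathlib

open FirstOrder CategoryTheory

universe u v

/-- A structure is locally finite if it is the union of an increasing chain of finite
substructures. -/
def IsLocallyFinite (L : FirstOrder.Language.{u, v}) (M : Type*) [L.Structure M] : Prop :=
  ∃ A : ℕ → L.Substructure M, Monotone A ∧ (∀ n, ((A n : Set M)).Finite) ∧
    (⋃ n, ((A n : Set M))) = Set.univ

/-- `M` is ultrahomogeneous: every isomorphism between finite substructures of `M`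
extends to an automorphism of `M`. -/
def IsUltrahomog (L : FirstOrder.Language.{u, v}) (M : Type*) [L.Structure M] : Prop :=
  ∀ S T : L.Substructure M, (S : Set M).Finite → (T : Set M).Finite →
    ∀ f : S ≃[L] T, ∃ g : M ≃[L] M, ∀ x : S, g x = f x

/-- `K` is an age class. -/
def IsAgeClass (L : FirstOrder.Language.{u, v}) (K : Set (Bundled.{0} L.Structure)) : Prop :=
  (∀ M ∈ K, Finite M) ∧
  (∀ M ∈ K, ∀ N : Bundled.{0} L.Structure, Nonempty (M ≃[L] N) → N ∈ K) ∧
  (∃ J : Set (Bundled.{0} L.Structure), J.Countable ∧ J ⊆ K ∧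
    ∀ M ∈ K, ∃ N ∈ J, Nonempty (N ≃[L] M)) ∧
  (∀ n : ℕ, ∃ M ∈ K, n ≤ Nat.card M) ∧
  (∀ M ∈ K, ∀ S : L.Substructure M, (⟨S, inferInstance⟩ : Bundled.{0} L.Structure) ∈ K) ∧
  (∀ M ∈ K, ∀ N ∈ K, ∃ P ∈ K, Nonempty (M ↪[L] P) ∧ Nonempty (N ↪[L] P))

/-- `K` has the amalgamation property. -/
def HasAP (L : FirstOrder.Language.{u, v}) (K : Set (Bundled.{0} L.Structure)) : Prop :=
  ∀ A ∈ K, ∀ B ∈ K, ∀ C ∈ K, ∀ (f : A ↪[L] B) (g : A ↪[L] C),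
    ∃ D ∈ K, ∃ (r : B ↪[L] D) (s : C ↪[L] D), r.comp f = s.comp g

/-! An ultrahomogeneous structure has amalgamation in its age: two embeddings of a common finite
substructure are glued by an automorphism. Conversely, the Fraïssé limit of `K` is the direct
limit of a chain in `K` in which stage `n` uses amalgamation to solve all (finitely many)
extension problems `A ↪ B`, `A ↪ Gₙ` for one pair of representatives `A`, `B`; since every pair
recurs infinitely often, every embedding of `A` into the limit extends along every `A ↪ B`, and a
back-and-forth argument turns this extension property into ultrahomogeneity. Local finiteness
makes "finite" and "finitely generated" interchangeable. -/

open FirstOrder.Language Structure Substructure Set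

universe w

variable {L : FirstOrder.Language.{u, v}}

section LocallyFinite

variable {M : Type*} [L.Structure M]

theorem IsLocallyFinite.finite_of_fg (hM : IsLocallyFinite L M) {S : L.Substructure M}
    (hS : S.FG) : (S : Set M).Finite := by
  obtain ⟨A, hmono, hfin, hcover⟩ := hM
  obtain ⟨X, rfl⟩ := hS
  have hdir : Directed (· ⊆ ·) fun n => (A n : Set M) := fun m n =>
    ⟨max m n, hmono (le_max_left m n), hmono (le_max_right m n)⟩
  obtain ⟨n, hn⟩ := hdir.exists_mem_subset_of_finset_subset_biUnion (hcover ▸ subset_univ _)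
  exact (hfin n).subset (closure_le.2 hn)

theorem isLocallyFinite_of_countable [Countable M]
    (hM : ∀ S : L.Substructure M, S.FG → (S : Set M).Finite) : IsLocallyFinite L M := by
  obtain ⟨c, hc⟩ := Countable.exists_injective_nat M
  refine ⟨fun n => closure L {x | c x < n}, fun m n hmn => closure_mono fun x hx => ?_,
    fun n => hM _ (fg_closure ?_), eq_univ_of_forall fun x => mem_iUnion.2 ⟨c x + 1, ?_⟩⟩
  · exact lt_of_lt_of_le hx hmn
  · exact (finite_lt_nat n).preimage hc.injOn
  · exact subset_closure (Nat.lt_succ_self _)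

theorem IsLocallyFinite.mem_age_iff (hM : IsLocallyFinite L M) {N : Bundled L.Structure} :
    N ∈ L.age M ↔ Finite N ∧ Nonempty (N ↪[L] M) := by
  refine ⟨fun ⟨hN, ⟨e⟩⟩ => ⟨?_, ⟨e⟩⟩, fun ⟨_, he⟩ => ⟨FG.of_finite, he⟩⟩
  have : Finite e.toHom.range := (hM.finite_of_fg (hN.range e.toHom)).to_subtype
  exact Finite.of_equiv _ e.equivRange.symm.toEquiv

theorem IsLocallyFinite.isUltrahomog_iff (hM : IsLocallyFinite L M) :
    IsUltrahomog L M ↔ L.IsUltrahomogeneous M := by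
  constructor
  · intro h S hS f
    have hT : (f.toHom.range : Set M).Finite :=
      hM.finite_of_fg ((S.fg_iff_structure_fg.1 hS).range f.toHom)
    obtain ⟨g, hg⟩ := h S f.toHom.range (hM.finite_of_fg hS) hT f.equivRange
    refine ⟨g, ?_⟩
    ext x
    simp [hg]
  · intro h S T hS hT f
    obtain ⟨g, hg⟩ := h S (FG.of_finite (h := hS.to_subtype)) (T.subtype.comp f.toEmbedding)
    exact ⟨g, fun x => (DFunLike.congr_fun hg x).symm⟩

end LocallyFinite

theorem exists_countable_representatives {K : Set (Bundled.{w} L.Structure)}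
    (hiso : ∀ M ∈ K, ∀ N : Bundled.{w} L.Structure, Nonempty (M ≃[L] N) → N ∈ K)
    (hc : (Quotient.mk' '' K).Countable) :
    ∃ J : Set (Bundled.{w} L.Structure), J.Countable ∧ J ⊆ K ∧
      ∀ M ∈ K, ∃ N ∈ J, Nonempty (N ≃[L] M) := by
  refine ⟨Quotient.out '' (Quotient.mk' '' K), hc.image _, ?_, fun M hM =>
    ⟨_, mem_image_of_mem _ (mem_image_of_mem _ hM), Quotient.mk_out (s := equivSetoid) M⟩⟩
  rintro _ ⟨_, ⟨M, hM, rfl⟩, rfl⟩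
  exact hiso M hM _ (Setoid.symm (Quotient.mk_out (s := equivSetoid) M))

theorem isAgeClass_age {M : Type} [L.Structure M] [Countable M] [Infinite M]
    (hM : IsLocallyFinite L M) : IsAgeClass L (L.age M) := by
  have hiso : ∀ N ∈ L.age M, ∀ N' : Bundled L.Structure, Nonempty (N ≃[L] N') → N' ∈ L.age M :=
    fun N hN N' h => (age.is_equiv_invariant L M N N' h).1 hN
  refine ⟨fun N hN => (hM.mem_age_iff.1 hN).1, hiso,
    exists_countable_representatives hiso (age.countable_quotient M), fun n => ?_,
    fun N hN S => ?_, age.jointEmbedding M⟩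
  · obtain ⟨s, rfl⟩ := Infinite.exists_subset_card_eq M n
    refine ⟨Bundled.of (closure L s), age.fg_substructure (fg_closure s.finite_toSet), ?_⟩
    rw [← Nat.card_eq_finsetCard]
    exact Nat.card_mono (hM.finite_of_fg (fg_closure s.finite_toSet)) subset_closure
  · obtain ⟨_, ⟨e⟩⟩ := hM.mem_age_iff.1 hN
    exact hM.mem_age_iff.2 ⟨inferInstance, ⟨e.comp S.subtype⟩⟩

theorem hasAP_age {M : Type} [L.Structure M] (h : L.IsUltrahomogeneous M) :
    HasAP L (L.age M) := by
  intro A hA B hB C hC f g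
  obtain ⟨D, r, s, hD, hrs⟩ := h.amalgamation_age A B C f g hA hB hC
  exact ⟨D, hD, r, s, hrs⟩

namespace FirstOrder.Language.Embedding

variable {N P : Type*} [L.Structure N] [L.Structure P]

def SolvesExtensions (ι : N ↪[L] P) (A B : Type*) [L.Structure A] [L.Structure B] : Prop :=
  ∀ (e : A ↪[L] B) (f : A ↪[L] N), ∃ g : B ↪[L] P, g.comp e = ι.comp f

variable {ι : N ↪[L] P} {A B : Type*} [L.Structure A] [L.Structure B]

theorem SolvesExtensions.of_equiv {A' B' : Type*} [L.Structure A'] [L.Structure B']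
    (h : ι.SolvesExtensions A' B') (α : A ≃[L] A') (β : B ≃[L] B') : ι.SolvesExtensions A B := by
  intro e f
  obtain ⟨g, hg⟩ := h ((β.toEmbedding.comp e).comp α.symm.toEmbedding) (f.comp α.symm.toEmbedding)
  refine ⟨g.comp β.toEmbedding, ext fun a => ?_⟩
  simpa using DFunLike.congr_fun hg (α a)

theorem SolvesExtensions.comp (h : ι.SolvesExtensions A B) {Q : Type*} [L.Structure Q]
    (κ : P ↪[L] Q) : (κ.comp ι).SolvesExtensions A B := by
  intro e f
  obtain ⟨g, hg⟩ := h e f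
  exact ⟨κ.comp g, by rw [comp_assoc, hg, comp_assoc]⟩

end FirstOrder.Language.Embedding

section Amalgamation

variable {K : Set (Bundled.{0} L.Structure)}

theorem HasAP.exists_solves_list (hAP : HasAP L K) {A B N : Bundled.{0} L.Structure}
    (hA : A ∈ K) (hB : B ∈ K) (hN : N ∈ K) (l : List ((A ↪[L] B) × (A ↪[L] N))) :
    ∃ P ∈ K, ∃ ι : N ↪[L] P, ∀ t ∈ l, ∃ g : B ↪[L] P, g.comp t.1 = ι.comp t.2 := by
  induction l with
  | nil => exact ⟨N, hN, Embedding.refl L N, by simp⟩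
  | cons t l ih =>
    obtain ⟨P, hP, ι, hι⟩ := ih
    obtain ⟨D, hD, r, s, hrs⟩ := hAP A hA B hB P hP t.1 (ι.comp t.2)
    refine ⟨D, hD, s.comp ι, List.forall_mem_cons.2 ⟨⟨r, by rw [hrs, Embedding.comp_assoc]⟩,
      fun t' ht' => ?_⟩⟩
    obtain ⟨g, hg⟩ := hι t' ht'
    exact ⟨s.comp g, by rw [Embedding.comp_assoc, hg, Embedding.comp_assoc]⟩

theorem HasAP.exists_solvesExtensions (hAP : HasAP L K) (hfin : ∀ M ∈ K, Finite M)
    {A B N : Bundled.{0} L.Structure} (hA : A ∈ K) (hB : B ∈ K) (hN : N ∈ K) :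
    ∃ P ∈ K, ∃ ι : N ↪[L] P, ι.SolvesExtensions A B := by
  have := hfin A hA
  have := hfin B hB
  have := hfin N hN
  have (X Y : Bundled.{0} L.Structure) [Finite X] [Finite Y] : Finite (X ↪[L] Y) :=
    Finite.of_injective _ DFunLike.coe_injective
  obtain ⟨l, -, hl⟩ := Finite.exists_univ_list ((A ↪[L] B) × (A ↪[L] N))
  obtain ⟨P, hP, ι, hι⟩ := hAP.exists_solves_list hA hB hN l
  exact ⟨P, hP, ι, fun e f => hι (e, f) (hl _)⟩

end Amalgamation

theorem FirstOrder.Language.DirectLimit.exists_of_comp_eq_of_finite {ι : Type*} [Preorder ι]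
    [IsDirectedOrder ι] [Nonempty ι] {G : ι → Type*} [∀ i, L.Structure (G i)]
    (f : ∀ i j, i ≤ j → G i ↪[L] G j) [DirectedSystem G fun i j h => f i j h]
    {A : Type*} [L.Structure A] [Finite A] (F : A ↪[L] Language.DirectLimit G f) :
    ∃ i, ∃ F₀ : A ↪[L] G i, (of L ι G f i).comp F₀ = F := by
  obtain ⟨i, y, hy⟩ := exists_quotient_mk'_sigma_mk'_eq G f F
  have hmem : ∀ a, F a ∈ (of L ι G f i).toHom.range := fun a =>
    ⟨y a, by rw [hy]; rfl⟩
  refine ⟨i, (of L ι G f i).equivRange.symm.toEmbedding.comp (F.codRestrict _ hmem), ?_⟩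
  ext a
  simp only [Embedding.comp_apply, Equiv.coe_toEmbedding]
  rw [← Embedding.equivRange_apply, Equiv.apply_symm_apply, Embedding.codRestrict_apply]

def HasExtensionProperty (K : Set (Bundled.{w} L.Structure)) (M : Type*) [L.Structure M] :
    Prop :=
  ∀ A ∈ K, ∀ B ∈ K, ∀ (e : A ↪[L] B) (f : A ↪[L] M), ∃ g : B ↪[L] M, g.comp e = f

theorem HasExtensionProperty.isUltrahomogeneous {K : Set (Bundled.{w} L.Structure)}
    {M : Type w} [L.Structure M] [Countable M] (hK : HasExtensionProperty K M)
    (hage : L.age M ⊆ K) : L.IsUltrahomogeneous M := by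
  refine (isUltrahomogeneous_iff_IsExtensionPair cg_of_countable).2
    (isExtensionPair_iff_exists_embedding_closure_singleton_sup.2 fun S hS f m => ?_)
  obtain ⟨g, hg⟩ := hK _ (hage (age.fg_substructure hS)) _
    (hage (age.fg_substructure ((fg_closure_singleton m).sup hS))) (inclusion le_sup_right) f
  exact ⟨g, hg.symm⟩

section Chain

variable {G : ℕ → Type*} [∀ n, L.Structure (G n)] (ι : ∀ n, G n ↪[L] G (n + 1))

theorem FirstOrder.Language.DirectedSystem.natLERec_succ (n : ℕ) :
    DirectedSystem.natLERec ι n (n + 1) (Nat.le_succ n) = ι n := by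
  ext x
  simp [Nat.leRecOn_succ']

theorem age_directLimit_natLERec {K : Set (Bundled L.Structure)} (hK : Hereditary K)
    (hfg : ∀ A ∈ K, FG L A) (hG : ∀ n, (Bundled.of (G n) : Bundled L.Structure) ∈ K)
    (hemb : ∀ A ∈ K, ∃ n, Nonempty (A ↪[L] G n)) :
    L.age (Language.DirectLimit G (DirectedSystem.natLERec ι)) = K := by
  rw [age_directLimit]
  refine subset_antisymm (iUnion_subset fun n => hK _ (hG n)) fun A hA => ?_
  obtain ⟨n, hn⟩ := hemb A hA
  exact mem_iUnion.2 ⟨n, hfg A hA, hn⟩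

theorem hasExtensionProperty_directLimit_natLERec {K : Set (Bundled L.Structure)}
    (hfin : ∀ A ∈ K, Finite A)
    (hext : ∀ A ∈ K, ∀ B ∈ K, ∀ m, ∃ n ≥ m, (ι n).SolvesExtensions A B) :
    HasExtensionProperty K (Language.DirectLimit G (DirectedSystem.natLERec ι)) := by
  intro A hA B hB e F
  have := hfin A hA
  obtain ⟨m, F₀, rfl⟩ := DirectLimit.exists_of_comp_eq_of_finite _ F
  obtain ⟨n, hmn, hn⟩ := hext A hA B hB m
  obtain ⟨g, hg⟩ := hn e ((DirectedSystem.natLERec ι m n hmn).comp F₀)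
  refine ⟨(DirectLimit.of L ℕ G _ (n + 1)).comp g, Embedding.ext fun a => ?_⟩
  have := DFunLike.congr_fun hg a
  simp only [Embedding.comp_apply] at this ⊢
  rw [this, ← DirectedSystem.natLERec_succ ι n, DirectLimit.of_f, DirectLimit.of_f]

end Chain

section AgeClass

variable {K : Set (Bundled.{0} L.Structure)}

theorem IsAgeClass.hereditary (hK : IsAgeClass L K) : Hereditary K := by
  obtain ⟨-, hiso, -, -, hsub, -⟩ := hK
  rintro M hM N ⟨-, ⟨e⟩⟩
  exact hiso _ (hsub M hM e.toHom.range) N ⟨e.equivRange.symm⟩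

theorem IsAgeClass.exists_enumeration (hK : IsAgeClass L K) :
    ∃ ρ : ℕ → Bundled.{0} L.Structure, (∀ i, ρ i ∈ K) ∧ ∀ A ∈ K, ∃ i, Nonempty (ρ i ≃[L] A) := by
  obtain ⟨-, -, ⟨J, hJc, hJK, hJ⟩, hunb, -, -⟩ := hK
  obtain ⟨A, hA, -⟩ := hunb 0
  obtain ⟨B, hB, -⟩ := hJ A hA
  obtain ⟨ρ, rfl⟩ := hJc.exists_eq_range ⟨B, hB⟩
  refine ⟨ρ, fun i => hJK (mem_range_self i), fun A hA => ?_⟩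
  obtain ⟨_, ⟨i, rfl⟩, h⟩ := hJ A hA
  exact ⟨i, h⟩

theorem IsAgeClass.exists_solvesExtensions_and_embedding (hK : IsAgeClass L K) (hAP : HasAP L K)
    {N A B : Bundled.{0} L.Structure} (hN : N ∈ K) (hA : A ∈ K) (hB : B ∈ K) :
    ∃ P ∈ K, ∃ ι : N ↪[L] P, ι.SolvesExtensions A B ∧ Nonempty (A ↪[L] P) := by
  obtain ⟨hfin, -, -, -, -, hjep⟩ := hK
  obtain ⟨P, hP, ι, hι⟩ := hAP.exists_solvesExtensions hfin hA hB hN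
  obtain ⟨Q, hQ, ⟨κ⟩, hA⟩ := hjep P hP A hA
  exact ⟨Q, hQ, κ.comp ι, hι.comp κ, hA⟩

theorem IsAgeClass.exists_chain (hK : IsAgeClass L K) (hAP : HasAP L K) :
    ∃ (G : ℕ → Bundled.{0} L.Structure) (ι : ∀ n, G n ↪[L] G (n + 1)), (∀ n, G n ∈ K) ∧
      (∀ A ∈ K, ∃ n, Nonempty (A ↪[L] G n)) ∧
      ∀ A ∈ K, ∀ B ∈ K, ∀ m, ∃ n ≥ m, (ι n).SolvesExtensions A B := by
  obtain ⟨ρ, hρK, hρ⟩ := hK.exists_enumeration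
  choose P hPK ι hι using fun (N : {N // N ∈ K}) (t : ℕ × ℕ) =>
    hK.exists_solvesExtensions_and_embedding hAP N.2 (hρK t.1) (hρK t.2)
  -- stage `n` treats the pair of indices `σ n`, and every pair recurs at arbitrarily late stages
  let σ : ℕ → ℕ × ℕ := fun n => n.unpair.2.unpair
  have hσ : ∀ i j m, ∃ n ≥ m, (σ n).1 = i ∧ (σ n).2 = j := fun i j m =>
    ⟨Nat.pair m (Nat.pair i j), Nat.left_le_pair _ _, by simp [σ]⟩
  let G : ℕ → {N // N ∈ K} := fun n =>
    Nat.rec ⟨ρ 0, hρK 0⟩ (fun n N => ⟨P N (σ n), hPK N (σ n)⟩) n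
  refine ⟨fun n => (G n).1, fun n => ι (G n) (σ n), fun n => (G n).2, fun A hA => ?_,
    fun A hA B hB m => ?_⟩
  · obtain ⟨i, ⟨α⟩⟩ := hρ A hA
    obtain ⟨n, -, rfl, -⟩ := hσ i 0 0
    obtain ⟨e⟩ := (hι (G n) (σ n)).2
    exact ⟨n + 1, ⟨e.comp α.symm.toEmbedding⟩⟩
  · obtain ⟨i, ⟨α⟩⟩ := hρ A hA
    obtain ⟨j, ⟨β⟩⟩ := hρ B hB
    obtain ⟨n, hmn, rfl, rfl⟩ := hσ i j m
    exact ⟨n, hmn, (hι (G n) (σ n)).1.of_equiv α.symm β.symm⟩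

theorem IsAgeClass.exists_ultrahomogeneous_age_eq (hK : IsAgeClass L K) (hAP : HasAP L K) :
    ∃ M : Bundled.{0} L.Structure, Countable M ∧ L.IsUltrahomogeneous M ∧ L.age M = K := by
  obtain ⟨G, ι, hGK, hemb, hext⟩ := hK.exists_chain hAP
  have hage := age_directLimit_natLERec ι hK.hereditary
    (fun A hA => @FG.of_finite _ _ _ (hK.1 A hA)) hGK hemb
  have : ∀ n, Countable (G n) := fun n => @Finite.to_countable _ (hK.1 _ (hGK n))
  have : Countable (Language.DirectLimit (fun n => G n) (DirectedSystem.natLERec ι)) :=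
    Quotient.countable
  exact ⟨Bundled.of (Language.DirectLimit (fun n => G n) (DirectedSystem.natLERec ι)), this,
    (hasExtensionProperty_directLimit_natLERec ι hK.1 hext).isUltrahomogeneous hage.le, hage⟩

end AgeClass

theorem infinite_of_unbounded_age {M : Type*} [L.Structure M]
    (h : ∀ n : ℕ, ∃ N ∈ L.age M, n ≤ Nat.card N) : Infinite M := by
  rw [← not_finite_iff_infinite]
  intro
  obtain ⟨N, ⟨-, ⟨e⟩⟩, hN⟩ := h (Nat.card M + 1)
  have := Nat.card_le_card_of_injective e e.injective
  omega

/-- A class of finite structures is a Fraïssé class (an age class with the amalgamation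
property) iff it is the age of a Fraïssé structure (a countably infinite, locally
finite, ultrahomogeneous structure). -/
theorem isFraisseClass_iff_age_of_fraisseStructure
    (L : FirstOrder.Language.{u, v}) (K : Set (Bundled.{0} L.Structure)) :
    (IsAgeClass L K ∧ HasAP L K) ↔
      ∃ M : Bundled.{0} L.Structure, Countable M ∧ Infinite M ∧ IsLocallyFinite L M ∧
        IsUltrahomog L M ∧
        ∀ N : Bundled.{0} L.Structure, (N ∈ K ↔ Finite N ∧ Nonempty (N ↪[L] M)) := by
  constructor
  · rintro ⟨hK, hAP⟩
    obtain ⟨M, _, huh, rfl⟩ := hK.exists_ultrahomogeneous_age_eq hAP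
    obtain ⟨hfin, -, -, hunb, -, -⟩ := hK
    have hM : IsLocallyFinite L M := isLocallyFinite_of_countable fun S hS =>
      Set.finite_coe_iff.1 (hfin _ (age.fg_substructure hS))
    exact ⟨M, ‹_›, infinite_of_unbounded_age hunb, hM, hM.isUltrahomog_iff.2 huh,
      fun N => hM.mem_age_iff⟩
  · rintro ⟨M, _, _, hM, huh, hK⟩
    obtain rfl : K = L.age M := Set.ext fun N => (hK N).trans hM.mem_age_iff.symm
    exact ⟨isAgeClass_age hM, hasAP_age (hM.isUltrahomog_iff.1 huh)⟩
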